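/- arXiv:math/0604033 — 4 statements merged into one kernel-verified Lean document; each statement's English description precedes it below -/
import Mathlib

section
/- Set α = i·(ω₂/2 − ω₁·ln(R)/(2π)) and β = i·(ω₂/2 + ω₁·ln(R)/(2π)). Then α and β lie on the open segment from 0 to iω₂ and are symmetric with respect to iω₂/2; the denominator of z vanishes at α, i.e. θ₄(πα/ω₁ + (i ln R)/2; q) = 0 (so z has a pole at α), and the numerator of z vanishes at β, i.e. θ₄(πβ/ω₁ − (i ln R)/2; q) = 0, so that z(β) = 0. -/
open scoped Real

noncomputable section

/-- Jacobi theta function θ₁(w;q). -/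
def jTheta1 (w : ℂ) (q : ℝ) : ℂ :=
  2 * ∑' n : ℕ, (-1 : ℂ) ^ n * ((q ^ (((n : ℝ) + 1 / 2) ^ 2) : ℝ) : ℂ) *
    Complex.sin (((2 * n + 1 : ℕ) : ℂ) * w)

/-- Jacobi theta function θ₂(w;q). -/
def jTheta2 (w : ℂ) (q : ℝ) : ℂ :=
  2 * ∑' n : ℕ, ((q ^ (((n : ℝ) + 1 / 2) ^ 2) : ℝ) : ℂ) *
    Complex.cos (((2 * n + 1 : ℕ) : ℂ) * w)

/-- Jacobi theta function θ₃(w;q). -/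
def jTheta3 (w : ℂ) (q : ℝ) : ℂ :=
  1 + 2 * ∑' n : ℕ, ((q ^ ((n + 1) ^ 2) : ℝ) : ℂ) *
    Complex.cos (((2 * (n + 1) : ℕ) : ℂ) * w)

/-- Jacobi theta function θ₄(w;q). -/
def jTheta4 (w : ℂ) (q : ℝ) : ℂ :=
  1 + 2 * ∑' n : ℕ, (-1 : ℂ) ^ (n + 1) * ((q ^ ((n + 1) ^ 2) : ℝ) : ℂ) *
    Complex.cos (((2 * (n + 1) : ℕ) : ℂ) * w)

/-- The conformal map z(u) = R·θ₄(πu/ω₁ − (i ln R)/2; q)/θ₄(πu/ω₁ + (i ln R)/2; q). -/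
def zmap (ω₁ R q : ℝ) (u : ℂ) : ℂ :=
  (R : ℂ) * jTheta4 ((π : ℂ) * u / (ω₁ : ℂ) - Complex.I * ((Real.log R : ℝ) : ℂ) / 2) q /
    jTheta4 ((π : ℂ) * u / (ω₁ : ℂ) + Complex.I * ((Real.log R : ℝ) : ℂ) / 2) q

end

/-! At `w = it/2` and `q = e^{-t}` one has `cos (2(n+1)w) = cosh ((n+1)t)`, and the `(n+1)`-st term
of `θ₄` becomes `(g (n+1) - g n) / 2` with `g n = (-1)ⁿ e^{-t n (n+1)}`. The series telescopes to
`-g 0 / 2 = -1/2`, so `θ₄(it/2; e^{-t}) = 0`. For `t = πω₂/ω₁` the argument of the denominator of `z`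
at `α` and that of the numerator at `β` are both `it/2`. -/

theorem Summable.tsum_telescope {G : Type*} [AddCommGroup G] [TopologicalSpace G]
    [IsTopologicalAddGroup G] [T2Space G] {f : ℕ → G} (hf : Summable f) :
    ∑' n, (f (n + 1) - f n) = -f 0 := by
  rw [((summable_nat_add_iff 1).2 hf).tsum_sub hf, hf.tsum_eq_zero_add]
  abel

noncomputable def jTheta4Telescope (t : ℝ) (n : ℕ) : ℂ :=
  (-1) ^ n * Complex.exp (-(t * n * (n + 1)))

lemma summable_jTheta4Telescope {t : ℝ} (ht : 0 < t) : Summable (jTheta4Telescope t) := by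
  refine .of_norm_bounded (summable_geometric_of_lt_one (Real.exp_pos _).le
    (Real.exp_lt_one_iff.2 (neg_lt_zero.2 ht))) fun n => ?_
  have hn : (n : ℝ) ≤ n * (n + 1) :=
    le_mul_of_one_le_right n.cast_nonneg (by linarith [n.cast_nonneg (α := ℝ)])
  rw [jTheta4Telescope, norm_mul, norm_pow, norm_neg, norm_one, one_pow, one_mul,
    Complex.norm_exp, ← Real.exp_nat_mul]
  refine Real.exp_le_exp.2 ?_
  norm_cast
  push_cast
  nlinarith

lemma jTheta4_term_eq_sub (t : ℝ) (n : ℕ) :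
    (-1 : ℂ) ^ (n + 1) * ((Real.exp (-t) ^ ((n + 1) ^ 2) : ℝ) : ℂ) *
        Complex.cos (((2 * (n + 1) : ℕ) : ℂ) * (Complex.I * ((t / 2 : ℝ) : ℂ))) =
      (jTheta4Telescope t (n + 1) - jTheta4Telescope t n) / 2 := by
  have harg : ((2 * (n + 1) : ℕ) : ℂ) * (Complex.I * ((t / 2 : ℝ) : ℂ)) =
      ((n + 1) * t) * Complex.I := by push_cast; ring
  rw [harg, Complex.cos_mul_I, Complex.cosh, ← Real.exp_nat_mul, Complex.ofReal_exp,
    jTheta4Telescope, jTheta4Telescope]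
  simp only [mul_div_assoc', mul_add, mul_assoc, ← Complex.exp_add, pow_succ]
  push_cast
  ring_nf

lemma jTheta4_I_mul_half_exp_neg {t : ℝ} (ht : 0 < t) :
    jTheta4 (Complex.I * ((t / 2 : ℝ) : ℂ)) (Real.exp (-t)) = 0 := by
  rw [jTheta4, tsum_congr (jTheta4_term_eq_sub t), tsum_div_const,
    Summable.tsum_telescope (summable_jTheta4Telescope ht)]
  norm_num [jTheta4Telescope]

/-- The pole α and zero β of the map z: both lie on the open segment from 0 to iω₂,
are symmetric with respect to iω₂/2, the denominator of z vanishes at α and the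
numerator vanishes at β, so that z(β) = 0. -/
theorem zmap_pole_and_zero (ω₁ ω₂ R : ℝ) (hω₁ : 0 < ω₁) (hω₂ : 0 < ω₂)
    (hR : 1 < R) (hR2 : R < Real.exp (π * ω₂ / ω₁)) (q : ℝ)
    (hq : q = Real.exp (-(π * ω₂ / ω₁)))
    (α β : ℂ)
    (hα : α = Complex.I * ((ω₂ / 2 - ω₁ * Real.log R / (2 * π) : ℝ) : ℂ))
    (hβ : β = Complex.I * ((ω₂ / 2 + ω₁ * Real.log R / (2 * π) : ℝ) : ℂ)) :
    α.re = 0 ∧ 0 < α.im ∧ α.im < ω₂ ∧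
    β.re = 0 ∧ 0 < β.im ∧ β.im < ω₂ ∧
    α + β = Complex.I * (ω₂ : ℂ) ∧
    jTheta4 ((π : ℂ) * α / (ω₁ : ℂ) + Complex.I * ((Real.log R : ℝ) : ℂ) / 2) q = 0 ∧
    jTheta4 ((π : ℂ) * β / (ω₁ : ℂ) - Complex.I * ((Real.log R : ℝ) : ℂ) / 2) q = 0 ∧
    zmap ω₁ R q β = 0 := by
  have hlog_pos : 0 < Real.log R := Real.log_pos hR
  have hlog_lt : Real.log R < π * ω₂ / ω₁ := (Real.log_lt_iff_lt_exp (by linarith)).2 hR2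
  have hshift_pos : 0 < ω₁ * Real.log R / (2 * π) := by positivity
  have hshift_lt : ω₁ * Real.log R / (2 * π) < ω₂ / 2 := by
    rw [lt_div_iff₀ hω₁] at hlog_lt
    rw [div_lt_div_iff₀ (by positivity) two_pos]
    nlinarith [Real.pi_pos]
  have hθ : jTheta4 (Complex.I * (((π * ω₂ / ω₁) / 2 : ℝ) : ℂ)) q = 0 :=
    hq ▸ jTheta4_I_mul_half_exp_neg (by positivity)
  have hω₁' : (ω₁ : ℂ) ≠ 0 := by exact_mod_cast hω₁.ne'
  have hπ' : (π : ℂ) ≠ 0 := by exact_mod_cast Real.pi_ne_zero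
  have hpole : (π : ℂ) * α / ω₁ + Complex.I * ((Real.log R : ℝ) : ℂ) / 2 =
      Complex.I * (((π * ω₂ / ω₁) / 2 : ℝ) : ℂ) := by
    rw [hα]; push_cast; field_simp; ring
  have hzero : (π : ℂ) * β / ω₁ - Complex.I * ((Real.log R : ℝ) : ℂ) / 2 =
      Complex.I * (((π * ω₂ / ω₁) / 2 : ℝ) : ℂ) := by
    rw [hβ]; push_cast; field_simp; ring
  refine ⟨?_, ?_, ?_, ?_, ?_, ?_, by rw [hα, hβ]; push_cast; ring, hpole ▸ hθ, hzero ▸ hθ,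
    by rw [zmap, hzero, hθ, mul_zero, zero_div]⟩
  all_goals simp only [hα, hβ, Complex.I_mul_re, Complex.I_mul_im, Complex.ofReal_re,
    Complex.ofReal_im, neg_zero]
  all_goals linarith
end

section
/- For every integer n ≥ 1 and every η ∈ (−π/2, π/2), the n-th derivative of arctan evaluated at x = tan η satisfies (dⁿ/dxⁿ) arctan(x)|_{x = tan η} = −(n−1)!·cos^{2n}(η)·Σ_{m=0}^{⌊(n−1)/2⌋} (−1)^{n−m}·C(n, 2m+1)·tan^{n−2m−1}(η), where C(n, j) denotes the binomial coefficient. -/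
/-!
Since `arctan' x = 1 / (1 + x ^ 2) = Im (1 / (x - i))`, differentiating `(x - i)⁻¹` repeatedly gives
`arctan⁽ⁿ⁾ x = (-1)ⁿ⁻¹ (n - 1)! Im ((x - i)⁻ⁿ) = (-1)ⁿ⁻¹ (n - 1)! Im ((x + i)ⁿ) / (1 + x²)ⁿ`.
At `x = tan η` the denominator is `cos η ^ (-2 n)`, and the binomial theorem writes `Im ((x + i)ⁿ)`
as the sum over the odd powers `i ^ (2 m + 1) = (-1)ᵐ i`.
-/

open scoped Real Nat
open Finset

namespace Complex

lemma im_I_pow_two_mul (m : ℕ) : (I ^ (2 * m)).im = 0 := by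
  rw [pow_mul, I_sq, ← ofReal_one, ← ofReal_neg, ← ofReal_pow, ofReal_im]

lemma im_I_pow_two_mul_add_one (m : ℕ) : (I ^ (2 * m + 1)).im = (-1) ^ m := by
  rw [pow_succ, pow_mul, I_sq, ← ofReal_one, ← ofReal_neg, ← ofReal_pow, im_ofReal_mul, I_im,
    mul_one]

lemma im_ofReal_add_I_pow (x : ℝ) (n : ℕ) :
    (((x : ℂ) + I) ^ n).im = ∑ m ∈ range ((n - 1) / 2 + 1),
      (-1) ^ m * (n.choose (2 * m + 1) : ℝ) * x ^ (n - 2 * m - 1) := by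
  rcases n.eq_zero_or_pos with rfl | hn
  · simp
  have hbinom : ((x : ℂ) + I) ^ n = ∑ j ∈ range (n + 1),
      I ^ j * ((x ^ (n - j) * n.choose j : ℝ) : ℂ) := by
    rw [add_comm, add_pow]
    exact sum_congr rfl fun j _ => by push_cast; ring
  have hodd : (range ((n - 1) / 2 + 1)).image (fun m => 2 * m + 1) ⊆ range (n + 1) := by
    intro j
    simp only [mem_image, mem_range]
    omega
  rw [hbinom, im_sum, ← sum_subset hodd, sum_image fun _ _ _ _ h => by omega]
  · refine sum_congr rfl fun m _ => ?_
    rw [im_mul_ofReal, im_I_pow_two_mul_add_one, Nat.sub_sub]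
    ring
  · intro j hj hj_odd
    rcases Nat.even_or_odd j with ⟨m, rfl⟩ | ⟨m, rfl⟩
    · rw [← two_mul, im_mul_ofReal, im_I_pow_two_mul, zero_mul]
    · refine absurd (mem_image.2 ⟨m, ?_, rfl⟩) hj_odd
      rw [mem_range] at hj ⊢
      omega

lemma ofReal_sub_I_ne_zero (x : ℝ) : (x : ℂ) - I ≠ 0 := fun h => by
  simpa using congrArg im h

lemma ofReal_sub_I_zpow_neg (x : ℝ) (n : ℕ) :
    ((x : ℂ) - I) ^ (-(n : ℤ)) = ((x : ℂ) + I) ^ n / ((1 + x ^ 2 : ℝ) : ℂ) ^ n := by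
  have hconj : ((x : ℂ) - I) * ((x : ℂ) + I) = ((1 + x ^ 2 : ℝ) : ℂ) := by
    push_cast
    ring_nf
    rw [I_sq]
    ring
  have hplus : (x : ℂ) + I ≠ 0 := fun h => by simpa using congrArg im h
  rw [zpow_neg, zpow_natCast, ← hconj, mul_pow, div_mul_cancel_right₀ (pow_ne_zero _ hplus)]

lemma hasDerivAt_im_ofReal_sub_I_zpow (m : ℤ) (x : ℝ) :
    HasDerivAt (fun y : ℝ => (((y : ℂ) - I) ^ m).im) (m * ((x : ℂ) - I) ^ (m - 1)).im x :=
  imCLM.hasFDerivAt.comp_hasDerivAt x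
    ((hasDerivAt_zpow m _ (Or.inl (ofReal_sub_I_ne_zero x))).comp_sub_const _ I).comp_ofReal

end Complex

namespace Real

lemma iteratedDeriv_succ_arctan_eq_im (n : ℕ) :
    iteratedDeriv (n + 1) arctan =
      fun x : ℝ => (-1) ^ n * n ! * (((x : ℂ) - Complex.I) ^ (-((n + 1 : ℕ) : ℤ))).im := by
  induction n with
  | zero =>
    ext x
    rw [iteratedDeriv_one, deriv_arctan, Complex.ofReal_sub_I_zpow_neg, pow_one, pow_one,
      Complex.div_ofReal_im]
    simp
  | succ n ih =>
    ext x
    rw [iteratedDeriv_succ, ih]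
    refine ((Complex.hasDerivAt_im_ofReal_sub_I_zpow _ x).const_mul _).deriv.trans ?_
    rw [← Complex.ofReal_intCast, Complex.im_ofReal_mul]
    push_cast [Nat.factorial_succ]
    ring_nf

lemma iteratedDeriv_succ_arctan (n : ℕ) (x : ℝ) :
    iteratedDeriv (n + 1) arctan x =
      (-1) ^ n * n ! * (((x : ℂ) + Complex.I) ^ (n + 1)).im / (1 + x ^ 2) ^ (n + 1) := by
  rw [iteratedDeriv_succ_arctan_eq_im]
  dsimp only
  rw [Complex.ofReal_sub_I_zpow_neg, ← Complex.ofReal_pow, Complex.div_ofReal_im]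
  ring

end Real

open Real in
/-- Closed formula for the n-th derivative of arctan at the point tan η. -/
theorem iteratedDeriv_arctan_at_tan (n : ℕ) (hn : 1 ≤ n) (η : ℝ)
    (hη1 : -(π / 2) < η) (hη2 : η < π / 2) :
    iteratedDeriv n Real.arctan (Real.tan η) =
      -((Nat.factorial (n - 1) : ℝ)) * Real.cos η ^ (2 * n) *
        ∑ m ∈ Finset.range ((n - 1) / 2 + 1),
          (-1 : ℝ) ^ (n - m) * (Nat.choose n (2 * m + 1) : ℝ) *
            Real.tan η ^ (n - 2 * m - 1) := by
  obtain ⟨k, rfl⟩ := Nat.exists_eq_add_of_le' hn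
  have hcos : cos η ≠ 0 := (cos_pos_of_mem_Ioo ⟨hη1, hη2⟩).ne'
  rw [iteratedDeriv_succ_arctan, Complex.im_ofReal_add_I_pow, div_eq_mul_inv, ← inv_pow,
    inv_one_add_tan_sq hcos, Nat.add_sub_cancel, pow_mul, mul_sum, sum_mul, mul_sum]
  refine sum_congr rfl fun m hm => ?_
  have hle : m ≤ k + 1 := by
    rw [mem_range] at hm
    omega
  have hsign : (-1 : ℝ) ^ (k + 1 - m) = (-1) ^ (k + 1 + m) :=
    neg_one_pow_congr (by rw [Nat.even_sub hle, Nat.even_add (m := k + 1)])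
  rw [hsign, pow_add, pow_succ]
  ring
end

section
/- For every η ∈ (0, π/2) and every real ε with |ε| < 1, the series Σ_{n=1}^∞ (εⁿ/n)·sinⁿ(η)·Σ_{m=0}^{⌊(n−1)/2⌋} (−1)^m·C(n, 2m+1)·sin^{n−2m−1}(η)·cos^{2m+1}(η) converges and arctan(tan(η)·(1−ε)) = η − Σ_{n=1}^∞ (εⁿ/n)·sinⁿ(η)·Σ_{m=0}^{⌊(n−1)/2⌋} (−1)^m·C(n, 2m+1)·sin^{n−2m−1}(η)·cos^{2m+1}(η). In particular arctan(tan(η)(1−ε)) = η − ε·cos(η)sin(η) − ε²·cos(η)sin³(η) − (ε³/3)·cos(η)sin³(η)(4sin²(η) − 1) − ε⁴·cos(η)sin⁵(η)(2sin²(η) − 1) + O(ε⁵) as ε → 0. -/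
/-!
Put `s = sin η`, `c = cos η` and `z = ε s (s + c i)`, so that `|z| ≤ |ε| < 1`. The inner sum
over `m` collects the odd-index binomial terms of `(s + c i)^(n+1)`, i.e. it is its imaginary
part, so the `n`-th term of the series is `Im z^(n+1) / (n+1)` and the series sums to
`Im (-log (1 - z)) = -arg (1 - z)`. On the other hand `(c + s i)(1 - z) = c + s(1 - ε) i`, and
adding arguments gives `arctan (tan η (1 - ε)) = η + arg (1 - z)`. The `O(ε⁵)` bound is the
geometric tail estimate after the first four terms, which are evaluated explicitly.
-/

open scoped Real
open Complex Finset

theorem Complex.im_ofReal_add_mul_I_pow_succ (x y : ℝ) (n : ℕ) :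
    (((x : ℂ) + y * I) ^ (n + 1)).im =
      ∑ m ∈ range (n / 2 + 1),
        (-1 : ℝ) ^ m * ((n + 1).choose (2 * m + 1) : ℝ) * x ^ (n - 2 * m) * y ^ (2 * m + 1) := by
  set f : ℕ → ℝ := fun k => ((y * I) ^ k * (x : ℂ) ^ (n + 1 - k) * ((n + 1).choose k : ℂ)).im
  have h_even (j : ℕ) : (y * I) ^ (2 * j) = (((-y ^ 2) ^ j : ℝ) : ℂ) := by
    rw [pow_mul, mul_pow, I_sq]; push_cast; ring
  calc (((x : ℂ) + y * I) ^ (n + 1)).im = ∑ k ∈ range (n + 2), f k := by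
        rw [add_comm, add_pow, im_sum]
    _ = ∑ k ∈ (range (n / 2 + 1)).image (fun m => 2 * m + 1), f k := by
        refine (sum_subset (fun k hk => ?_) fun k hk hk_odd => ?_).symm
        · obtain ⟨m, hm, rfl⟩ := mem_image.mp hk
          simp only [mem_range] at hm ⊢
          omega
        · obtain ⟨j, rfl⟩ : Even k := by
            simp only [mem_image, mem_range, not_exists, not_and] at hk hk_odd
            by_contra h
            obtain ⟨m, rfl⟩ := Nat.not_even_iff_odd.mp h
            exact hk_odd m (by omega) rfl
          simp only [f, ← two_mul, h_even, ← ofReal_pow, ← ofReal_natCast, ← ofReal_mul, ofReal_im]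
    _ = ∑ m ∈ range (n / 2 + 1), f (2 * m + 1) :=
        sum_image fun _ _ _ _ h => by simpa using h
    _ = _ := sum_congr rfl fun m _ => by
        simp only [f, pow_succ, h_even, show n + 1 - (2 * m + 1) = n - 2 * m by omega,
          ← ofReal_pow, ← ofReal_natCast, mul_im, ofReal_re, ofReal_im, I_re, I_im]
        ring

theorem Complex.arg_eq_arctan_of_re_pos {w : ℂ} (hw : 0 < w.re) :
    arg w = Real.arctan (w.im / w.re) := by
  obtain ⟨h_lo, h_hi⟩ := abs_lt.mp (abs_arg_lt_pi_div_two_iff.mpr (Or.inl hw))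
  rw [← tan_arg, Real.arctan_tan h_lo h_hi]

theorem Complex.hasSum_im_pow_succ_div {z : ℂ} (hz : ‖z‖ < 1) :
    HasSum (fun n : ℕ => (z ^ (n + 1)).im / (n + 1)) (-arg (1 - z)) := by
  convert hasSum_im (hasSum_taylorSeries_neg_log' hz) using 1
  · ext n
    exact_mod_cast (div_natCast_im (z ^ (n + 1)) (n + 1)).symm
  · rw [neg_im, log_im]

theorem norm_mul_sin_add_cos_mul_I_le (ε η : ℝ) :
    ‖ε * Real.sin η * (Real.sin η + Real.cos η * I)‖ ≤ |ε| := by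
  rw [norm_mul, norm_mul, norm_add_mul_I, Real.sin_sq_add_cos_sq, Real.sqrt_one, mul_one,
    norm_real, norm_real, Real.norm_eq_abs, Real.norm_eq_abs]
  exact mul_le_of_le_one_right (abs_nonneg ε) (Real.abs_sin_le_one η)

theorem arctan_tan_mul_one_sub {η ε : ℝ} (hη : η ∈ Set.Ioo (-(π / 2)) (π / 2)) (hε : |ε| < 1) :
    Real.arctan (Real.tan η * (1 - ε)) =
      η + arg (1 - ε * Real.sin η * (Real.sin η + Real.cos η * I)) := by
  set s := Real.sin η with hs
  set c := Real.cos η with hc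
  set v : ℂ := 1 - ε * s * (s + c * I)
  have h_pyth : s ^ 2 + c ^ 2 = 1 := Real.sin_sq_add_cos_sq η
  have hc_pos : 0 < c := Real.cos_pos_of_mem_Ioo hη
  have hv_re : 0 < v.re := by
    have h_lt : ε * s ^ 2 < 1 := by
      nlinarith [abs_lt.mp hε, Real.sin_sq_le_one η, le_abs_self ε, neg_abs_le ε]
    simp only [v, sub_re, one_re, mul_re, mul_im, add_re, add_im, ofReal_re, ofReal_im, I_re, I_im]
    nlinarith
  have h_arg_v : |arg v| < π / 2 := abs_arg_lt_pi_div_two_iff.mpr (Or.inl hv_re)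
  have h_arg_rot : arg (c + s * I) = η := by
    rw [hs, hc, ofReal_cos, ofReal_sin]
    exact arg_cos_add_sin_mul_I ⟨by linarith [hη.1, Real.pi_pos], by linarith [hη.2, Real.pi_pos]⟩
  have h_rot_v : (c + s * I) * v = ⟨c, s * (1 - ε)⟩ := by
    have h_pyth' : (s : ℂ) ^ 2 + (c : ℂ) ^ 2 = 1 := by exact_mod_cast h_pyth
    rw [mk_eq_add_mul_I]
    push_cast
    linear_combination (-(ε * s ^ 2 * c : ℂ)) * I_sq - (ε * s * I) * h_pyth'
  have h_rot_ne : (c + s * I : ℂ) ≠ 0 := fun h => by simpa [hc_pos.ne'] using congrArg re h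
  have h_v_ne : v ≠ 0 := fun h => by simp [h] at hv_re
  have h_arg_mul := arg_mul h_rot_ne h_v_ne
    ⟨by linarith [abs_lt.mp h_arg_v, hη.1], by linarith [abs_lt.mp h_arg_v, hη.2]⟩
  rw [h_rot_v, h_arg_rot, arg_eq_arctan_of_re_pos (w := ⟨c, s * (1 - ε)⟩) hc_pos] at h_arg_mul
  rw [← h_arg_mul, Real.tan_eq_sin_div_cos, div_mul_eq_mul_div]

noncomputable def arctanTanSeriesTerm (η ε : ℝ) (n : ℕ) : ℝ :=
  (ε ^ (n + 1) / (n + 1)) * Real.sin η ^ (n + 1) *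
    ∑ m ∈ range (n / 2 + 1),
      (-1 : ℝ) ^ m * (Nat.choose (n + 1) (2 * m + 1) : ℝ) *
        Real.sin η ^ (n - 2 * m) * Real.cos η ^ (2 * m + 1)

theorem arctanTanSeriesTerm_eq_im (η ε : ℝ) (n : ℕ) :
    arctanTanSeriesTerm η ε n =
      ((ε * Real.sin η * (Real.sin η + Real.cos η * I)) ^ (n + 1)).im / (n + 1) := by
  rw [arctanTanSeriesTerm, ← im_ofReal_add_mul_I_pow_succ, mul_pow, ← ofReal_mul, ← ofReal_pow,
    im_ofReal_mul, mul_pow]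
  ring

theorem abs_arctanTanSeriesTerm_le (η ε : ℝ) (n : ℕ) :
    |arctanTanSeriesTerm η ε n| ≤ |ε| ^ (n + 1) := by
  set z : ℂ := ε * Real.sin η * (Real.sin η + Real.cos η * I)
  rw [arctanTanSeriesTerm_eq_im, abs_div, abs_of_pos (by positivity : (0 : ℝ) < n + 1)]
  calc _ ≤ |(z ^ (n + 1)).im| := div_le_self (abs_nonneg _) (by simp)
    _ ≤ ‖z‖ ^ (n + 1) := (abs_im_le_norm _).trans (norm_pow _ _).le
    _ ≤ |ε| ^ (n + 1) := pow_le_pow_left₀ (norm_nonneg _) (norm_mul_sin_add_cos_mul_I_le ε η) _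

theorem hasSum_arctanTanSeriesTerm {η ε : ℝ} (hη : η ∈ Set.Ioo (-(π / 2)) (π / 2))
    (hε : |ε| < 1) :
    HasSum (arctanTanSeriesTerm η ε) (η - Real.arctan (Real.tan η * (1 - ε))) := by
  convert hasSum_im_pow_succ_div ((norm_mul_sin_add_cos_mul_I_le ε η).trans_lt hε) using 1
  · exact funext (arctanTanSeriesTerm_eq_im η ε)
  · rw [arctan_tan_mul_one_sub hη hε]
    ring

theorem sum_range_four_arctanTanSeriesTerm (η ε : ℝ) :
    ∑ n ∈ range 4, arctanTanSeriesTerm η ε n =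
      ε * Real.cos η * Real.sin η + ε ^ 2 * Real.cos η * Real.sin η ^ 3
        + (ε ^ 3 / 3) * Real.cos η * Real.sin η ^ 3 * (4 * Real.sin η ^ 2 - 1)
        + ε ^ 4 * Real.cos η * Real.sin η ^ 5 * (2 * Real.sin η ^ 2 - 1) := by
  have h_pyth := Real.sin_sq_add_cos_sq η
  simp only [arctanTanSeriesTerm, sum_range_succ, sum_range_zero]
  norm_num [Nat.choose]
  linear_combination (-(ε ^ 3 * Real.sin η ^ 3 / 3 + ε ^ 4 * Real.sin η ^ 5) * Real.cos η) * h_pyth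
theorem abs_sum_range_arctanTanSeriesTerm_sub_le {η ε : ℝ}
    (hη : η ∈ Set.Ioo (-(π / 2)) (π / 2)) (hε : |ε| < 1) (k : ℕ) :
    |∑ n ∈ range k, arctanTanSeriesTerm η ε n - (η - Real.arctan (Real.tan η * (1 - ε)))| ≤
      |ε| ^ (k + 1) / (1 - |ε|) := by
  rw [pow_succ']
  exact norm_sub_le_of_geometric_bound_of_hasSum hε
    (fun n => by simpa [pow_succ'] using abs_arctanTanSeriesTerm_le η ε n)
    (hasSum_arctanTanSeriesTerm hη hε) k

/-- Taylor expansion of arctan(tan η·(1−ε)): the series converges for |ε| < 1 and sums to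
η − arctan(tan η·(1−ε)); in particular the expansion up to order ε⁴ with O(ε⁵) remainder
holds as ε → 0. -/
theorem arctan_tan_expansion (η : ℝ) (hη1 : 0 < η) (hη2 : η < π / 2) :
    (∀ ε : ℝ, |ε| < 1 →
      Summable (fun n : ℕ =>
        (ε ^ (n + 1) / (n + 1)) * Real.sin η ^ (n + 1) *
          ∑ m ∈ Finset.range (n / 2 + 1),
            (-1 : ℝ) ^ m * (Nat.choose (n + 1) (2 * m + 1) : ℝ) *
              Real.sin η ^ (n - 2 * m) * Real.cos η ^ (2 * m + 1)) ∧
      Real.arctan (Real.tan η * (1 - ε)) =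
        η - ∑' n : ℕ,
          (ε ^ (n + 1) / (n + 1)) * Real.sin η ^ (n + 1) *
            ∑ m ∈ Finset.range (n / 2 + 1),
              (-1 : ℝ) ^ m * (Nat.choose (n + 1) (2 * m + 1) : ℝ) *
                Real.sin η ^ (n - 2 * m) * Real.cos η ^ (2 * m + 1)) ∧
    (∃ C > (0 : ℝ), ∃ ε₀ > (0 : ℝ), ∀ ε : ℝ, |ε| < ε₀ →
      |Real.arctan (Real.tan η * (1 - ε)) -
          (η - ε * Real.cos η * Real.sin η - ε ^ 2 * Real.cos η * Real.sin η ^ 3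
            - (ε ^ 3 / 3) * Real.cos η * Real.sin η ^ 3 * (4 * Real.sin η ^ 2 - 1)
            - ε ^ 4 * Real.cos η * Real.sin η ^ 5 * (2 * Real.sin η ^ 2 - 1))|
        ≤ C * |ε| ^ 5) := by
  have hη : η ∈ Set.Ioo (-(π / 2)) (π / 2) := ⟨by linarith [Real.pi_pos], hη2⟩
  refine ⟨fun ε hε => ?_, 2, two_pos, 1 / 2, one_half_pos, fun ε hε => ?_⟩
  · have h_sum := hasSum_arctanTanSeriesTerm hη hε
    exact ⟨h_sum.summable, (sub_sub_cancel η _).symm.trans (congrArg (η - ·) h_sum.tsum_eq.symm)⟩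
  · have h_tail := abs_sum_range_arctanTanSeriesTerm_sub_le hη (by linarith) 4
    rw [sum_range_four_arctanTanSeriesTerm] at h_tail
    calc _ = |ε * Real.cos η * Real.sin η + ε ^ 2 * Real.cos η * Real.sin η ^ 3
            + (ε ^ 3 / 3) * Real.cos η * Real.sin η ^ 3 * (4 * Real.sin η ^ 2 - 1)
            + ε ^ 4 * Real.cos η * Real.sin η ^ 5 * (2 * Real.sin η ^ 2 - 1)
            - (η - Real.arctan (Real.tan η * (1 - ε)))| := by congr 1; ring
      _ ≤ |ε| ^ 5 / (1 - |ε|) := h_tail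
      _ ≤ 2 * |ε| ^ 5 := by
        rw [div_le_iff₀ (by linarith)]
        nlinarith [pow_nonneg (abs_nonneg ε) 5]
end

section
/- Fix η ∈ (0, π/2) and define k(q₁) = θ₄(0;q₁)²/θ₃(0;q₁)². Then as q₁ → 0⁺, (1/√(k(q₁)))·θ₁(η;q₁)/θ₂(η;q₁) = tan(η) + 4·q₁·tan(η) + O(q₁²); that is, there exist C > 0 and q₀ ∈ (0,1) such that |(1/√(k(q₁)))·θ₁(η;q₁)/θ₂(η;q₁) − tan(η)·(1 + 4q₁)| ≤ C·q₁² for all 0 < q₁ < q₀. -/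
open scoped Real

/-!
Factoring `2 q^{1/4}` out of `θ₁(η)` and `θ₂(η)` leaves power series in `q`; each of them, as well
as `θ₃(0)` and `θ₄(0)`, is its leading term plus a tail dominated by a geometric series of order
`q²`. Hence `θ₁/θ₂ = tan η + O(q²)` and `θ₃(0)/θ₄(0) = (1 + 2q)/(1 - 2q) + O(q²) = 1 + 4q + O(q²)`.
For small `q` both theta constants are positive reals, so the principal square root of
`θ₄(0)²/θ₃(0)²` is `θ₄(0)/θ₃(0)`, and the expansions multiply by the Big-O calculus for products and
quotients of functions with nonzero limits.
-/

open Filter Topology Asymptotics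

namespace Asymptotics

variable {α 𝕜 : Type*} [NormedField 𝕜] {l : Filter α} {k : α → ℝ}

theorem IsBigO.tendsto_of_sub {f g : α → 𝕜} {c : 𝕜} (h : (fun x => f x - g x) =O[l] k)
    (hk : Tendsto k l (𝓝 0)) (hg : Tendsto g l (𝓝 c)) : Tendsto f l (𝓝 c) := by
  simpa using (h.trans_tendsto hk).add hg

theorem IsBigO.mul_sub_mul {f f₀ g g₀ : α → 𝕜} (hf : (fun x => f x - f₀ x) =O[l] k)
    (hg : (fun x => g x - g₀ x) =O[l] k) (hf₀ : f₀ =O[l] (1 : α → ℝ))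
    (hg_bdd : g =O[l] (1 : α → ℝ)) : (fun x => f x * g x - f₀ x * g₀ x) =O[l] k := by
  have hsum := (hf.mul hg_bdd).add (hg.mul hf₀)
  simp only [Pi.one_apply, mul_one] at hsum
  exact hsum.congr (fun x => by ring) fun _ => rfl

theorem IsBigO.inv_sub_inv {g g₀ : α → 𝕜} {b : 𝕜} (hg : (fun x => g x - g₀ x) =O[l] k)
    (hg_lim : Tendsto g l (𝓝 b)) (hg₀_lim : Tendsto g₀ l (𝓝 b)) (hb : b ≠ 0) :
    (fun x => (g x)⁻¹ - (g₀ x)⁻¹) =O[l] k := by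
  have hprod : (fun x => (g x * g₀ x)⁻¹) =O[l] (1 : α → ℝ) :=
    ((hg_lim.mul hg₀_lim).inv₀ (mul_ne_zero hb hb)).isBigO_one ℝ
  have hsum := (hg.mul hprod).neg_left
  simp only [Pi.one_apply, mul_one] at hsum
  refine hsum.congr' ?_ EventuallyEq.rfl
  filter_upwards [hg_lim.eventually_ne hb, hg₀_lim.eventually_ne hb] with x hx hx₀
  field_simp
  ring

theorem IsBigO.div_sub_div {f f₀ g g₀ : α → 𝕜} {b : 𝕜} (hf : (fun x => f x - f₀ x) =O[l] k)
    (hg : (fun x => g x - g₀ x) =O[l] k) (hf₀ : f₀ =O[l] (1 : α → ℝ))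
    (hg_lim : Tendsto g l (𝓝 b)) (hg₀_lim : Tendsto g₀ l (𝓝 b)) (hb : b ≠ 0) :
    (fun x => f x / g x - f₀ x / g₀ x) =O[l] k := by
  simpa only [div_eq_mul_inv] using
    hf.mul_sub_mul (hg.inv_sub_inv hg_lim hg₀_lim hb) hf₀ ((hg_lim.inv₀ hb).isBigO_one ℝ)

end Asymptotics

lemma exists_bound_of_isBigO_nhdsGT_zero {E : Type*} [SeminormedAddCommGroup E] {f : ℝ → E}
    {k : ℕ} (h : f =O[𝓝[>] 0] fun q => q ^ k) :
    ∃ C > 0, ∃ q₀ ∈ Set.Ioo (0 : ℝ) 1, ∀ q, 0 < q → q < q₀ → ‖f q‖ ≤ C * q ^ k := by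
  obtain ⟨C, hC, hCf⟩ := h.exists_pos
  obtain ⟨ε, hε, hsub⟩ := (nhdsGT_basis 0).mem_iff.1 hCf.bound
  refine ⟨C, hC, min ε (1 / 2), ⟨lt_min hε (by norm_num), by linarith [min_le_right ε (1 / 2)]⟩,
    fun q hq hqε => ?_⟩
  simpa [abs_of_pos hq] using hsub ⟨hq, hqε.trans_le (min_le_left _ _)⟩

lemma tendsto_nhdsGT_zero_of_continuous {f : ℝ → ℝ} (hf : Continuous f) :
    Tendsto f (𝓝[>] 0) (𝓝 (f 0)) :=
  hf.continuousAt.tendsto.mono_left nhdsWithin_le_nhds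

lemma tendsto_sq_nhdsGT_zero : Tendsto (fun q : ℝ => q ^ 2) (𝓝[>] 0) (𝓝 0) := by
  simpa using tendsto_nhdsGT_zero_of_continuous (continuous_pow 2)

section PowerSeriesTail

variable {a : ℕ → ℝ} {e : ℕ → ℕ} {k : ℕ} {q : ℝ}

lemma summable_mul_pow_and_abs_tsum_le (ha : ∀ n, |a n| ≤ 1) (he : ∀ n, n + k ≤ e n) (hq0 : 0 ≤ q)
    (hq : q ≤ 1 / 2) : Summable (fun n => a n * q ^ e n) ∧ |∑' n, a n * q ^ e n| ≤ 2 * q ^ k := by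
  have hq1 : q < 1 := by linarith
  have hterm (n : ℕ) : ‖a n * q ^ e n‖ ≤ q ^ k * q ^ n := by
    rw [Real.norm_eq_abs, abs_mul, abs_pow, abs_of_nonneg hq0, ← pow_add, add_comm k]
    exact (mul_le_of_le_one_left (pow_nonneg hq0 _) (ha n)).trans
      (pow_le_pow_of_le_one hq0 hq1.le (he n))
  have hgeom := (hasSum_geometric_of_lt_one hq0 hq1).mul_left (q ^ k)
  refine ⟨.of_norm_bounded hgeom.summable hterm, ?_⟩
  calc |∑' n, a n * q ^ e n| ≤ q ^ k * (1 - q)⁻¹ := tsum_of_norm_bounded hgeom hterm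
    _ ≤ 2 * q ^ k := by
      rw [mul_comm]
      gcongr
      rw [inv_le_comm₀ (by linarith) two_pos]
      linarith

lemma isBigO_tsum_mul_pow_sub_head (ha : ∀ n, |a n| ≤ 1) (he : ∀ n, n + k ≤ e (n + 1)) :
    (fun q : ℝ => ∑' n, a n * q ^ e n - a 0 * q ^ e 0) =O[𝓝[>] 0] fun q => q ^ k := by
  refine .of_bound 2 ?_
  filter_upwards [Ioo_mem_nhdsGT (by norm_num : (0 : ℝ) < 1 / 2)] with q ⟨hq0, hq⟩
  obtain ⟨hsum, hbound⟩ := summable_mul_pow_and_abs_tsum_le (fun n => ha (n + 1)) he hq0.le hq.le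
  rw [((summable_nat_add_iff (f := fun n => a n * q ^ e n) 1).1 hsum).tsum_eq_zero_add,
    add_sub_cancel_left, Real.norm_eq_abs, Real.norm_eq_abs, abs_of_pos (pow_pos hq0 k)]
  exact hbound

end PowerSeriesTail

noncomputable def theta1Reduced (η q : ℝ) : ℝ :=
  ∑' n : ℕ, (-1) ^ n * Real.sin ((2 * n + 1) * η) * q ^ (n * (n + 1))

noncomputable def theta2Reduced (η q : ℝ) : ℝ :=
  ∑' n : ℕ, Real.cos ((2 * n + 1) * η) * q ^ (n * (n + 1))

noncomputable def thetaNull3 (q : ℝ) : ℝ :=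
  1 + 2 * ∑' n : ℕ, q ^ (n + 1) ^ 2

noncomputable def thetaNull4 (q : ℝ) : ℝ :=
  1 + 2 * ∑' n : ℕ, (-1) ^ (n + 1) * q ^ (n + 1) ^ 2

lemma rpow_nat_add_half_sq {q : ℝ} (hq : 0 < q) (n : ℕ) :
    q ^ (((n : ℝ) + 1 / 2) ^ 2) = q ^ (1 / 4 : ℝ) * q ^ (n * (n + 1)) := by
  have h : ((n : ℝ) + 1 / 2) ^ 2 = 1 / 4 + ((n * (n + 1) : ℕ) : ℝ) := by push_cast; ring
  rw [h, Real.rpow_add hq, Real.rpow_natCast]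

lemma jTheta1_ofReal (η : ℝ) {q : ℝ} (hq : 0 < q) :
    jTheta1 η q = ((2 * q ^ (1 / 4 : ℝ) * theta1Reduced η q : ℝ) : ℂ) := by
  simp_rw [jTheta1, theta1Reduced, mul_assoc, ← tsum_mul_left, rpow_nat_add_half_sq hq]
  push_cast
  congr 2 with n
  ring

lemma jTheta2_ofReal (η : ℝ) {q : ℝ} (hq : 0 < q) :
    jTheta2 η q = ((2 * q ^ (1 / 4 : ℝ) * theta2Reduced η q : ℝ) : ℂ) := by
  simp_rw [jTheta2, theta2Reduced, mul_assoc, ← tsum_mul_left, rpow_nat_add_half_sq hq]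
  push_cast
  congr 2 with n
  ring

lemma jTheta3_zero (q : ℝ) : jTheta3 0 q = thetaNull3 q := by
  simp [jTheta3, thetaNull3, Complex.ofReal_tsum]

lemma jTheta4_zero (q : ℝ) : jTheta4 0 q = thetaNull4 q := by
  simp [jTheta4, thetaNull4, Complex.ofReal_tsum]

lemma theta1Reduced_sub_sin_isBigO (η : ℝ) :
    (fun q => theta1Reduced η q - Real.sin η) =O[𝓝[>] 0] fun q => q ^ 2 := by
  simpa [theta1Reduced] using isBigO_tsum_mul_pow_sub_head (k := 2)
    (a := fun n => (-1) ^ n * Real.sin ((2 * n + 1) * η)) (e := fun n => n * (n + 1))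
    (fun n => by simp [abs_mul, Real.abs_sin_le_one]) (fun n => by nlinarith)

lemma theta2Reduced_sub_cos_isBigO (η : ℝ) :
    (fun q => theta2Reduced η q - Real.cos η) =O[𝓝[>] 0] fun q => q ^ 2 := by
  simpa [theta2Reduced] using isBigO_tsum_mul_pow_sub_head (k := 2)
    (a := fun n => Real.cos ((2 * n + 1) * η)) (e := fun n => n * (n + 1))
    (fun n => Real.abs_cos_le_one _) (fun n => by nlinarith)

lemma thetaNull3_sub_isBigO :
    (fun q => thetaNull3 q - (1 + 2 * q)) =O[𝓝[>] 0] fun q => q ^ 2 := by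
  have h := (isBigO_tsum_mul_pow_sub_head (k := 2) (a := fun _ => 1) (e := fun n => (n + 1) ^ 2)
    (fun n => by simp) (fun n => by nlinarith)).const_mul_left 2
  refine h.congr (fun q => ?_) (fun _ => rfl)
  simp only [thetaNull3, one_mul]
  ring

lemma thetaNull4_sub_isBigO :
    (fun q => thetaNull4 q - (1 - 2 * q)) =O[𝓝[>] 0] fun q => q ^ 2 := by
  have h := (isBigO_tsum_mul_pow_sub_head (k := 2) (a := fun n => (-1) ^ (n + 1))
    (e := fun n => (n + 1) ^ 2) (fun n => by simp) (fun n => by nlinarith)).const_mul_left 2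
  refine h.congr (fun q => ?_) (fun _ => rfl)
  simp only [thetaNull4]
  ring

lemma tendsto_thetaNull3 : Tendsto thetaNull3 (𝓝[>] 0) (𝓝 1) :=
  thetaNull3_sub_isBigO.tendsto_of_sub tendsto_sq_nhdsGT_zero <| by
    simpa using tendsto_nhdsGT_zero_of_continuous (f := fun q : ℝ => 1 + 2 * q) (by fun_prop)

lemma tendsto_thetaNull4 : Tendsto thetaNull4 (𝓝[>] 0) (𝓝 1) :=
  thetaNull4_sub_isBigO.tendsto_of_sub tendsto_sq_nhdsGT_zero <| by
    simpa using tendsto_nhdsGT_zero_of_continuous (f := fun q : ℝ => 1 - 2 * q) (by fun_prop)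

lemma thetaNull3_div_thetaNull4_sub_isBigO :
    (fun q => thetaNull3 q / thetaNull4 q - (1 + 4 * q)) =O[𝓝[>] 0] fun q => q ^ 2 := by
  have hlin : Tendsto (fun q : ℝ => 1 - 2 * q) (𝓝[>] 0) (𝓝 1) := by
    simpa using tendsto_nhdsGT_zero_of_continuous (f := fun q : ℝ => 1 - 2 * q) (by fun_prop)
  have hquot := thetaNull3_sub_isBigO.div_sub_div thetaNull4_sub_isBigO
    ((tendsto_nhdsGT_zero_of_continuous (f := fun q : ℝ => 1 + 2 * q) (by fun_prop)).isBigO_one ℝ)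
    tendsto_thetaNull4 hlin one_ne_zero
  have hgeom : (fun q : ℝ => (1 + 2 * q) / (1 - 2 * q) - (1 + 4 * q)) =O[𝓝[>] 0]
      fun q => q ^ 2 := by
    have h8 := ((hlin.inv₀ one_ne_zero).const_mul 8).isBigO_one ℝ |>.mul
      (isBigO_refl (fun q : ℝ => q ^ 2) _)
    simp only [one_mul] at h8
    refine h8.congr' ?_ EventuallyEq.rfl
    filter_upwards [Ioo_mem_nhdsGT (by norm_num : (0 : ℝ) < 1 / 2)] with q ⟨_, hq⟩
    have : 1 - 2 * q ≠ 0 := by linarith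
    field_simp
    ring
  exact (hquot.add hgeom).congr (fun q => by ring) fun _ => rfl

lemma theta_ratio_sub_isBigO {η : ℝ} (hc : Real.cos η ≠ 0) :
    (fun q => thetaNull3 q / thetaNull4 q * (theta1Reduced η q / theta2Reduced η q)
      - (1 + 4 * q) * Real.tan η) =O[𝓝[>] 0] fun q => q ^ 2 := by
  have hlim1 := (theta1Reduced_sub_sin_isBigO η).tendsto_of_sub tendsto_sq_nhdsGT_zero
    tendsto_const_nhds
  have hlim2 := (theta2Reduced_sub_cos_isBigO η).tendsto_of_sub tendsto_sq_nhdsGT_zero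
    tendsto_const_nhds
  have htan := (theta1Reduced_sub_sin_isBigO η).div_sub_div (theta2Reduced_sub_cos_isBigO η)
    (isBigO_const_one ℝ _ _) hlim2 tendsto_const_nhds hc
  simp only [← Real.tan_eq_sin_div_cos] at htan
  exact thetaNull3_div_thetaNull4_sub_isBigO.mul_sub_mul htan
    ((tendsto_nhdsGT_zero_of_continuous (f := fun q : ℝ => 1 + 4 * q) (by fun_prop)).isBigO_one ℝ)
    ((hlim1.div hlim2 hc).isBigO_one ℝ)

lemma cpow_half_sq_ofReal {x : ℝ} (hx : 0 ≤ x) : ((x : ℂ) ^ 2) ^ ((1 : ℂ) / 2) = x := by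
  have h := Complex.pow_cpow_nat_inv (x := x) two_ne_zero
    (by rw [Complex.arg_ofReal_of_nonneg hx]; linarith [Real.pi_pos])
    (by rw [Complex.arg_ofReal_of_nonneg hx]; positivity)
  simpa [one_div] using h

lemma sn_quotient_eq_ofReal (η : ℝ) {q : ℝ} (hq : 0 < q) (h3 : 0 < thetaNull3 q)
    (h4 : 0 < thetaNull4 q) :
    1 / ((jTheta4 0 q ^ 2 / jTheta3 0 q ^ 2) ^ ((1 : ℂ) / 2)) * (jTheta1 η q / jTheta2 η q) =
      ((thetaNull3 q / thetaNull4 q * (theta1Reduced η q / theta2Reduced η q) : ℝ) : ℂ) := by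
  have hpre : 2 * ((q ^ (1 / 4 : ℝ) : ℝ) : ℂ) ≠ 0 := by
    exact_mod_cast (mul_pos two_pos (Real.rpow_pos_of_pos hq _)).ne'
  rw [jTheta1_ofReal η hq, jTheta2_ofReal η hq, jTheta3_zero, jTheta4_zero, ← div_pow,
    ← Complex.ofReal_div, cpow_half_sq_ofReal (div_pos h4 h3).le]
  push_cast
  rw [mul_div_mul_left _ _ hpre, one_div_div]

/-- Asymptotic expansion of sn(iα,k)/i = (1/√k)·θ₁(η;q₁)/θ₂(η;q₁) as q₁ → 0⁺, for fixed
η ∈ (0, π/2): it equals tan η + 4q₁·tan η + O(q₁²). -/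
theorem sn_expansion (η : ℝ) (hη1 : 0 < η) (hη2 : η < π / 2) :
    ∃ C > (0 : ℝ), ∃ q₀ ∈ Set.Ioo (0 : ℝ) 1, ∀ q₁ : ℝ, 0 < q₁ → q₁ < q₀ →
      ‖(1 / (((jTheta4 0 q₁) ^ 2 / (jTheta3 0 q₁) ^ 2) ^ ((1 : ℂ) / 2)))
              * (jTheta1 (η : ℂ) q₁ / jTheta2 (η : ℂ) q₁)
            - ((Real.tan η + 4 * q₁ * Real.tan η : ℝ) : ℂ)‖ ≤ C * q₁ ^ 2 := by
  have hc : Real.cos η ≠ 0 := (Real.cos_pos_of_mem_Ioo ⟨by linarith, hη2⟩).ne'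
  have hpos3 := tendsto_thetaNull3.eventually (eventually_gt_nhds one_pos)
  have hpos4 := tendsto_thetaNull4.eventually (eventually_gt_nhds one_pos)
  apply exists_bound_of_isBigO_nhdsGT_zero
  refine (Complex.isBigO_ofReal_left.mpr (theta_ratio_sub_isBigO hc)).congr' ?_ EventuallyEq.rfl
  filter_upwards [self_mem_nhdsWithin, hpos3, hpos4] with q hq h3 h4
  rw [sn_quotient_eq_ofReal η hq h3 h4]
  push_cast
  ring
end
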